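/- With the zero-quantities Υ_{ab}, Θ_a, Δ_{abc} as above, the second integrability condition holds identically: 2∇_{[a}Θ_{b]} = −2L_{[a}{}^{c}Υ_{b]c} + Δ_{abc}∇^cΞ. -/

import Mathlib

/- A coordinate-based formalisation of pseudo-Riemannian geometry on ℝⁿ
   (global chart), used to state results about the conformal Einstein
   field equations. -/

noncomputable section

/-- Points of the manifold (global coordinate chart). -/
abbrev Pt (n : ℕ) : Type := Fin n → ℝ

/-- A metric, given by its matrix of components at each point. -/
abbrev Met (n : ℕ) : Type := Pt n → Matrix (Fin n) (Fin n) ℝ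

/-- Partial derivative in the i-th coordinate direction. -/
def pd {n : ℕ} (i : Fin n) (f : Pt n → ℝ) (x : Pt n) : ℝ :=
  fderiv ℝ f x (Pi.single i 1)

/-- Inverse metric g^{ab}. -/
def ginv {n : ℕ} (g : Met n) (x : Pt n) : Matrix (Fin n) (Fin n) ℝ := (g x)⁻¹

/-- Christoffel symbols Γ^a_{bc} of the Levi-Civita connection of g. -/
def Chr {n : ℕ} (g : Met n) (x : Pt n) (a b c : Fin n) : ℝ :=
  (1/2) * ∑ d : Fin n, ginv g x a d *
    (pd b (fun y => g y d c) x + pd c (fun y => g y b d) x - pd d (fun y => g y b c) x)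

/-- Riemann curvature tensor R^a_{bcd}. -/
def Riem {n : ℕ} (g : Met n) (x : Pt n) (a b c d : Fin n) : ℝ :=
  pd c (fun y => Chr g y a d b) x - pd d (fun y => Chr g y a c b) x
    + ∑ e : Fin n, (Chr g x a c e * Chr g x e d b - Chr g x a d e * Chr g x e c b)

/-- Riemann tensor with all indices lowered, R_{abcd}. -/
def RiemLow {n : ℕ} (g : Met n) (x : Pt n) (a b c d : Fin n) : ℝ :=
  ∑ e : Fin n, g x a e * Riem g x e b c d

/-- Ricci tensor R_{bd}. -/
def RicciT {n : ℕ} (g : Met n) (x : Pt n) (b d : Fin n) : ℝ :=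
  ∑ a : Fin n, Riem g x a b a d

/-- Ricci scalar R. -/
def ScalC {n : ℕ} (g : Met n) (x : Pt n) : ℝ :=
  ∑ b : Fin n, ∑ d : Fin n, ginv g x b d * RicciT g x b d

/-- Covariant derivative of a covector field, (∇_a ω)_b. -/
def covD1 {n : ℕ} (g : Met n) (ω : Pt n → Fin n → ℝ) (x : Pt n) (a b : Fin n) : ℝ :=
  pd a (fun y => ω y b) x - ∑ c : Fin n, Chr g x c a b * ω x c

/-- Covariant derivative of a (0,2)-tensor field, (∇_a T)_{bc}. -/
def covD2 {n : ℕ} (g : Met n) (T : Pt n → Fin n → Fin n → ℝ) (x : Pt n) (a b c : Fin n) : ℝ :=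
  pd a (fun y => T y b c) x - ∑ d : Fin n, Chr g x d a b * T x d c
    - ∑ d : Fin n, Chr g x d a c * T x b d

/-- Covariant derivative of a (0,3)-tensor field, (∇_a T)_{bcd}. -/
def covD3 {n : ℕ} (g : Met n) (T : Pt n → Fin n → Fin n → Fin n → ℝ)
    (x : Pt n) (a b c d : Fin n) : ℝ :=
  pd a (fun y => T y b c d) x - ∑ e : Fin n, Chr g x e a b * T x e c d
    - ∑ e : Fin n, Chr g x e a c * T x b e d - ∑ e : Fin n, Chr g x e a d * T x b c e

/-- Covariant derivative of a (0,4)-tensor field, (∇_a T)_{bcde}. -/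
def covD4 {n : ℕ} (g : Met n) (T : Pt n → Fin n → Fin n → Fin n → Fin n → ℝ)
    (x : Pt n) (a b c d e : Fin n) : ℝ :=
  pd a (fun y => T y b c d e) x - ∑ f : Fin n, Chr g x f a b * T x f c d e
    - ∑ f : Fin n, Chr g x f a c * T x b f d e - ∑ f : Fin n, Chr g x f a d * T x b c f e
    - ∑ f : Fin n, Chr g x f a e * T x b c d f

/-- Covariant derivative of a vector field, ∇_a τ^b. -/
def covDvec {n : ℕ} (g : Met n) (τ : Pt n → Fin n → ℝ) (x : Pt n) (a b : Fin n) : ℝ :=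
  pd a (fun y => τ y b) x + ∑ c : Fin n, Chr g x b a c * τ x c

/-- Covariant Hessian ∇_a∇_b f. -/
def Hess {n : ℕ} (g : Met n) (f : Pt n → ℝ) (x : Pt n) (a b : Fin n) : ℝ :=
  covD1 g (fun y b' => pd b' f y) x a b

/-- Wave operator □f = g^{ab}∇_a∇_b f. -/
def box {n : ℕ} (g : Met n) (f : Pt n → ℝ) (x : Pt n) : ℝ :=
  ∑ a : Fin n, ∑ b : Fin n, ginv g x a b * Hess g f x a b

def SmoothF {n : ℕ} (f : Pt n → ℝ) : Prop := ContDiff ℝ (⊤ : ℕ∞) f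
def Smooth1 {n : ℕ} (ω : Pt n → Fin n → ℝ) : Prop := ∀ i, ContDiff ℝ (⊤ : ℕ∞) fun x => ω x i
def Smooth2 {n : ℕ} (T : Pt n → Fin n → Fin n → ℝ) : Prop :=
  ∀ i j, ContDiff ℝ (⊤ : ℕ∞) fun x => T x i j
def Smooth3 {n : ℕ} (T : Pt n → Fin n → Fin n → Fin n → ℝ) : Prop :=
  ∀ i j k, ContDiff ℝ (⊤ : ℕ∞) fun x => T x i j k
def Smooth4 {n : ℕ} (T : Pt n → Fin n → Fin n → Fin n → Fin n → ℝ) : Prop :=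
  ∀ i j k l, ContDiff ℝ (⊤ : ℕ∞) fun x => T x i j k l
def SmoothMet {n : ℕ} (g : Met n) : Prop := ∀ i j, ContDiff ℝ (⊤ : ℕ∞) fun x => g x i j
def SymmMet {n : ℕ} (g : Met n) : Prop := ∀ x i j, g x i j = g x j i
def InvMet {n : ℕ} (g : Met n) : Prop := ∀ x, IsUnit (g x).det

/-- Schouten tensor in dimension 4: L_{ab} = (1/2)(R_{ab} - (1/6) R g_{ab}). -/
def Schouten (g : Met 4) (x : Pt 4) (a b : Fin 4) : ℝ :=
  (1/2) * (RicciT g x a b - (1/6) * ScalC g x * g x a b)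

/-- Schouten tensor in dimension 3: l_{ij} = r_{ij} - (1/4) r ℓ_{ij}. -/
def Schouten3 (g : Met 3) (x : Pt 3) (a b : Fin 3) : ℝ :=
  RicciT g x a b - (1/4) * ScalC g x * g x a b

/-- Weyl tensor (all indices lowered) in dimension 4:
  C_{abcd} = R_{abcd} - 2(g_{a[c}L_{d]b} - g_{b[c}L_{d]a}). -/
def WeylT (g : Met 4) (x : Pt 4) (a b c d : Fin 4) : ℝ :=
  RiemLow g x a b c d - g x a c * Schouten g x d b + g x a d * Schouten g x c b
    + g x b c * Schouten g x d a - g x b d * Schouten g x c a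

/-- Algebraic symmetries of the (lowered) Weyl tensor for a 4-index tensor field:
antisymmetry in each pair, pair-interchange symmetry, first Bianchi identity and
trace-freeness. -/
def WeylSymm {n : ℕ} (g : Met n) (d : Pt n → Fin n → Fin n → Fin n → Fin n → ℝ) : Prop :=
  (∀ x a b c e, d x a b c e = - d x b a c e) ∧
  (∀ x a b c e, d x a b c e = - d x a b e c) ∧
  (∀ x a b c e, d x a b c e = d x c e a b) ∧
  (∀ x a b c e, d x a b c e + d x a c e b + d x a e b c = 0) ∧
  (∀ x b e, ∑ a : Fin n, ∑ c : Fin n, ginv g x a c * d x a b c e = 0)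

/-- Squared norm of the gradient of a scalar field, ∇_cΞ∇^cΞ. -/
def gradSq {n : ℕ} (g : Met n) (Ξ : Pt n → ℝ) (x : Pt n) : ℝ :=
  ∑ c : Fin n, ∑ e : Fin n, ginv g x c e * pd c Ξ x * pd e Ξ x

/-- Zero-quantity Υ_{ab} = ∇_a∇_bΞ + ΞL_{ab} - s g_{ab}. -/
def UpsQ (g : Met 4) (Ξ s : Pt 4 → ℝ) (L : Pt 4 → Fin 4 → Fin 4 → ℝ)
    (x : Pt 4) (a b : Fin 4) : ℝ :=
  Hess g Ξ x a b + Ξ x * L x a b - s x * g x a b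

/-- Zero-quantity Θ_a = ∇_a s + L_{ac}∇^cΞ. -/
def ThetaQ (g : Met 4) (Ξ s : Pt 4 → ℝ) (L : Pt 4 → Fin 4 → Fin 4 → ℝ)
    (x : Pt 4) (a : Fin 4) : ℝ :=
  pd a s x + ∑ c : Fin 4, ∑ f : Fin 4, L x a c * ginv g x c f * pd f Ξ x

/-- Zero-quantity Δ_{abc} = ∇_aL_{bc} - ∇_bL_{ac} + ∇_eΞ d^e{}_{cab}. -/
def DeltaQ (g : Met 4) (Ξ : Pt 4 → ℝ) (L : Pt 4 → Fin 4 → Fin 4 → ℝ)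
    (d : Pt 4 → Fin 4 → Fin 4 → Fin 4 → Fin 4 → ℝ) (x : Pt 4) (a b c : Fin 4) : ℝ :=
  covD2 g L x a b c - covD2 g L x b a c
    + ∑ e : Fin 4, ∑ f : Fin 4, ginv g x e f * pd e Ξ x * d x f c a b

/-- Zero-quantity Λ_{bcd} = ∇_a d^a{}_{bcd}. -/
def LamQ (g : Met 4) (d : Pt 4 → Fin 4 → Fin 4 → Fin 4 → Fin 4 → ℝ)
    (x : Pt 4) (b c e : Fin 4) : ℝ :=
  ∑ a : Fin 4, ∑ f : Fin 4, ginv g x a f * covD4 g d x a f b c e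

/-- The quantity 6Ξs - 3∇_cΞ∇^cΞ appearing in the conformal constraint. -/
def phiQ (g : Met 4) (Ξ s : Pt 4 → ℝ) (x : Pt 4) : ℝ :=
  6 * Ξ x * s x - 3 * gradSq g Ξ x

section Helpers
variable {n : ℕ}

lemma pd_congr {f h : Pt n → ℝ} (hfh : ∀ y, f y = h y) (i : Fin n) (x : Pt n) :
    pd i f x = pd i h x := by
  have : f = h := funext hfh
  rw [this]

lemma contDiff_pd {f : Pt n → ℝ} (hf : ContDiff ℝ (⊤ : ℕ∞) f) (i : Fin n) :
    ContDiff ℝ (⊤ : ℕ∞) (fun x => pd i f x) := by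
  have h1 : ContDiff ℝ (⊤ : ℕ∞) (fderiv ℝ f) := (hf.fderiv_right (m := (⊤ : ℕ∞)) le_rfl)
  exact (ContinuousLinearMap.apply ℝ ℝ (Pi.single i 1)).contDiff.comp h1

lemma pd_add {f h : Pt n → ℝ} {x : Pt n} (hf : DifferentiableAt ℝ f x)
    (hh : DifferentiableAt ℝ h x) (i : Fin n) :
    pd i (fun y => f y + h y) x = pd i f x + pd i h x := by
  unfold pd; rw [fderiv_fun_add hf hh]; rfl

lemma pd_mul {f h : Pt n → ℝ} {x : Pt n} (hf : DifferentiableAt ℝ f x)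
    (hh : DifferentiableAt ℝ h x) (i : Fin n) :
    pd i (fun y => f y * h y) x = pd i f x * h x + f x * pd i h x := by
  unfold pd; rw [fderiv_fun_mul hf hh]; simp; ring

lemma pd_const {x : Pt n} (c : ℝ) (i : Fin n) : pd i (fun _ => c) x = 0 := by
  unfold pd; simp

lemma pd_sum {ι : Type*} {s : Finset ι} {f : ι → Pt n → ℝ} {x : Pt n}
    (hf : ∀ j ∈ s, DifferentiableAt ℝ (f j) x) (i : Fin n) :
    pd i (fun y => ∑ j ∈ s, f j y) x = ∑ j ∈ s, pd i (f j) x := by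
  unfold pd
  rw [fderiv_fun_sum hf]
  simp

lemma pd_comm {f : Pt n → ℝ} (hf : ContDiff ℝ (⊤ : ℕ∞) f) (a b : Fin n) (x : Pt n) :
    pd a (fun y => pd b f y) x = pd b (fun y => pd a f y) x := by
  have hsymm : IsSymmSndFDerivAt ℝ f x := (hf.contDiffAt).isSymmSndFDerivAt (by
    rw [minSmoothness_of_isRCLikeNormedField]; exact WithTop.coe_le_coe.mpr (le_top : (2 : ℕ∞) ≤ ⊤))
  have key : ∀ (v w : Fin n → ℝ), fderiv ℝ (fun y => fderiv ℝ f y w) x v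
      = fderiv ℝ (fderiv ℝ f) x v w := by
    intro v w
    have hdf : DifferentiableAt ℝ (fderiv ℝ f) x :=
      ((hf.fderiv_right (m := (⊤ : ℕ∞)) le_rfl).differentiable (by simp)).differentiableAt
    have := (ContinuousLinearMap.apply ℝ ℝ w).hasFDerivAt.comp x hdf.hasFDerivAt
    have h2 : HasFDerivAt (fun y => fderiv ℝ f y w)
        (((ContinuousLinearMap.apply ℝ ℝ) w).comp (fderiv ℝ (fderiv ℝ f) x)) x := this
    rw [h2.fderiv]
    rfl
  show fderiv ℝ (fun y => fderiv ℝ f y (Pi.single b 1)) x (Pi.single a 1) = _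
  rw [key, hsymm]
  rw [← key]
  rfl

lemma contDiff_det {g : Met n} (hg : SmoothMet g) : ContDiff ℝ (⊤ : ℕ∞) (fun x => (g x).det) := by
  have : (fun x => (g x).det) = fun x => ∑ σ : Equiv.Perm (Fin n),
      ((Equiv.Perm.sign σ : ℤ) : ℝ) * ∏ i, g x (σ i) i := by
    funext x; rw [Matrix.det_apply']
  rw [this]
  apply ContDiff.sum
  intro σ _
  exact contDiff_const.mul (contDiff_prod (fun i _ => hg (σ i) i))

lemma contDiff_ginv {g : Met n} (hg : SmoothMet g) (hinv : InvMet g) (i j : Fin n) :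
    ContDiff ℝ (⊤ : ℕ∞) (fun x => ginv g x i j) := by
  have hadj : ContDiff ℝ (⊤ : ℕ∞) (fun x => (g x).adjugate i j) := by
    have : (fun x => (g x).adjugate i j)
        = fun x => ((g x).updateRow j (Pi.single i 1)).det := by
      funext x; rw [Matrix.adjugate_apply]
    rw [this]
    apply contDiff_det (g := fun x => (g x).updateRow j (Pi.single i 1))
    intro a b
    by_cases h : a = j
    · subst h; simpa using contDiff_const
    · simp only [Matrix.updateRow_apply, if_neg h]
      exact hg a b
  have heq : (fun x => ginv g x i j) = fun x => ((g x).det)⁻¹ * (g x).adjugate i j := by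
    funext x
    rw [ginv, Matrix.inv_def]
    simp [Ring.inverse_eq_inv']
  rw [heq]
  exact ((contDiff_det hg).inv (fun x => (hinv x).ne_zero)).mul hadj

lemma ginv_symm {g : Met n} (hsym : SymmMet g) (x : Pt n) (i j : Fin n) :
    ginv g x i j = ginv g x j i := by
  have ht : Matrix.transpose (g x) = g x := by
    ext a b; exact hsym x b a
  have : Matrix.transpose ((g x)⁻¹) = (g x)⁻¹ := by
    rw [Matrix.transpose_nonsing_inv, ht]
  calc ginv g x i j = Matrix.transpose ((g x)⁻¹) j i := rfl
    _ = (g x)⁻¹ j i := by rw [this]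
    _ = ginv g x j i := rfl

lemma ginv_mul {g : Met n} (hinv : InvMet g) (x : Pt n) (a b : Fin n) :
    ∑ c : Fin n, ginv g x a c * g x c b = if a = b then 1 else 0 := by
  have h := Matrix.nonsing_inv_mul (g x) (hinv x)
  have := congrFun (congrFun h a) b
  simpa [Matrix.mul_apply, Matrix.one_apply, ginv] using this

lemma mul_ginv {g : Met n} (hinv : InvMet g) (x : Pt n) (a b : Fin n) :
    ∑ c : Fin n, g x a c * ginv g x c b = if a = b then 1 else 0 := by
  have h := Matrix.mul_nonsing_inv (g x) (hinv x)
  have := congrFun (congrFun h a) b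
  simpa [Matrix.mul_apply, Matrix.one_apply, ginv] using this

lemma pd_ginv_aux {g : Met n} (hg : SmoothMet g) (hinv : InvMet g) (x : Pt n) (i a b : Fin n) :
    ∑ c : Fin n, (pd i (fun y => ginv g y a c) x * g x c b
      + ginv g x a c * pd i (fun y => g y c b) x) = 0 := by
  have h1 : (fun y => ∑ c : Fin n, ginv g y a c * g y c b)
      = (fun _ => if a = b then (1:ℝ) else 0) := by
    funext y; exact ginv_mul hinv y a b
  have h2 : pd i (fun y => ∑ c : Fin n, ginv g y a c * g y c b) x = 0 := by
    rw [h1]; exact pd_const _ _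
  rw [pd_sum (fun c _ => ((contDiff_ginv hg hinv a c).differentiable (by simp) x).fun_mul
    ((hg c b).differentiable (by simp) x)) i] at h2
  rw [← h2]
  apply Finset.sum_congr rfl
  intro c _
  exact (pd_mul ((contDiff_ginv hg hinv a c).differentiable (by simp) x)
    ((hg c b).differentiable (by simp) x) i).symm

lemma pd_ginv {g : Met n} (hg : SmoothMet g) (hinv : InvMet g) (x : Pt n) (i a b : Fin n) :
    pd i (fun y => ginv g y a b) x
      = -∑ c : Fin n, ∑ e : Fin n, ginv g x a c * pd i (fun y => g y c e) x * ginv g x e b := by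
  have key : ∀ c, pd i (fun y => ginv g y a c) x * (∑ e, g x c e * ginv g x e b)
      = pd i (fun y => ginv g y a c) x * (if c = b then 1 else 0) := by
    intro c; rw [mul_ginv hinv]
  have h0 : pd i (fun y => ginv g y a b) x
      = ∑ c : Fin n, pd i (fun y => ginv g y a c) x * (∑ e, g x c e * ginv g x e b) := by
    rw [Finset.sum_congr rfl (fun c _ => key c)]
    simp
  rw [h0]
  have h1 : ∀ c, pd i (fun y => ginv g y a c) x * (∑ e, g x c e * ginv g x e b)
      = ∑ e, pd i (fun y => ginv g y a c) x * g x c e * ginv g x e b := by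
    intro c; rw [Finset.mul_sum]; apply Finset.sum_congr rfl; intro e _; ring
  rw [Finset.sum_congr rfl (fun c _ => h1 c), Finset.sum_comm]
  rw [show (∑ c : Fin n, ∑ e : Fin n, ginv g x a c * pd i (fun y => g y c e) x * ginv g x e b)
      = ∑ e : Fin n, ∑ c : Fin n, ginv g x a c * pd i (fun y => g y c e) x * ginv g x e b
    from Finset.sum_comm]
  rw [← Finset.sum_neg_distrib]
  apply Finset.sum_congr rfl
  intro e _
  have haux := pd_ginv_aux hg hinv x i a e
  have : ∑ c : Fin n, pd i (fun y => ginv g y a c) x * g x c e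
      = -∑ c : Fin n, ginv g x a c * pd i (fun y => g y c e) x := by
    have := haux
    rw [Finset.sum_add_distrib] at this
    linarith
  calc ∑ c : Fin n, pd i (fun y => ginv g y a c) x * g x c e * ginv g x e b
      = (∑ c : Fin n, pd i (fun y => ginv g y a c) x * g x c e) * ginv g x e b := by
        rw [Finset.sum_mul]
    _ = (-∑ c : Fin n, ginv g x a c * pd i (fun y => g y c e) x) * ginv g x e b := by rw [this]
    _ = -∑ c : Fin n, ginv g x a c * pd i (fun y => g y c e) x * ginv g x e b := by
        rw [neg_mul, Finset.sum_mul]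

lemma pd_g_symm {g : Met n} (hsym : SymmMet g) (x : Pt n) (i a b : Fin n) :
    pd i (fun y => g y a b) x = pd i (fun y => g y b a) x :=
  pd_congr (fun y => hsym y a b) i x

lemma pd_ginv_chr {g : Met n} (hg : SmoothMet g) (hsym : SymmMet g) (hinv : InvMet g)
    (x : Pt n) (b d f : Fin n) :
    pd b (fun y => ginv g y d f) x
      = -∑ c : Fin n, (Chr g x d b c * ginv g x c f + Chr g x f b c * ginv g x d c) := by
  rw [pd_ginv hg hinv]
  rw [neg_eq_iff_eq_neg, neg_neg]
  have e1 : ∑ c : Fin n, Chr g x d b c * ginv g x c f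
      = ∑ c : Fin n, ∑ e : Fin n, (1/2) * ginv g x d e
        * (pd b (fun y => g y e c) x + pd c (fun y => g y b e) x - pd e (fun y => g y b c) x)
        * ginv g x c f := by
    apply Finset.sum_congr rfl; intro c _
    simp only [Chr, Finset.mul_sum, Finset.sum_mul]
    apply Finset.sum_congr rfl; intro e _; ring
  have e2 : ∑ c : Fin n, Chr g x f b c * ginv g x d c
      = ∑ c : Fin n, ∑ e : Fin n, (1/2) * ginv g x f c
        * (pd b (fun y => g y c e) x + pd e (fun y => g y b c) x - pd c (fun y => g y b e) x)
        * ginv g x d e := by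
    rw [show (∑ c : Fin n, Chr g x f b c * ginv g x d c)
        = ∑ c : Fin n, ∑ e : Fin n, (1/2) * ginv g x f e
          * (pd b (fun y => g y e c) x + pd c (fun y => g y b e) x - pd e (fun y => g y b c) x)
          * ginv g x d c from by
      apply Finset.sum_congr rfl; intro c _
      simp only [Chr, Finset.mul_sum, Finset.sum_mul]
      apply Finset.sum_congr rfl; intro e _; ring]
    exact Finset.sum_comm
  rw [Finset.sum_add_distrib, e1, e2, ← Finset.sum_add_distrib]
  rw [show (∑ c : Fin n, ∑ e : Fin n, ginv g x d c * pd b (fun y => g y c e) x * ginv g x e f)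
      = ∑ e : Fin n, ∑ c : Fin n, ginv g x d c * pd b (fun y => g y c e) x * ginv g x e f
    from Finset.sum_comm]
  apply Finset.sum_congr rfl; intro c _
  rw [← Finset.sum_add_distrib]
  apply Finset.sum_congr rfl; intro e _
  rw [ginv_symm hsym x f c, pd_g_symm hsym x b c e, pd_g_symm hsym x c b e,
    pd_g_symm hsym x e b c]
  ring

lemma Chr_symm {g : Met n} (hsym : SymmMet g) (x : Pt n) (d u v : Fin n) :
    Chr g x d u v = Chr g x d v u := by
  unfold Chr
  congr 1
  apply Finset.sum_congr rfl; intro e _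
  rw [pd_g_symm hsym x u e v, pd_g_symm hsym x v u e, pd_g_symm hsym x e u v]
  ring

lemma sum2_comm (F : Fin n → Fin n → ℝ) :
    ∑ c : Fin n, ∑ f : Fin n, F c f = ∑ c : Fin n, ∑ f : Fin n, F f c :=
  Finset.sum_comm

lemma sum3_comm12 (F : Fin n → Fin n → Fin n → ℝ) :
    (∑ c : Fin n, ∑ f : Fin n, ∑ d : Fin n, F c f d)
      = ∑ c : Fin n, ∑ f : Fin n, ∑ d : Fin n, F f c d :=
  Finset.sum_comm

lemma sum3_comm23 (F : Fin n → Fin n → Fin n → ℝ) :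
    (∑ c : Fin n, ∑ f : Fin n, ∑ d : Fin n, F c f d)
      = ∑ c : Fin n, ∑ f : Fin n, ∑ d : Fin n, F c d f :=
  Finset.sum_congr rfl (fun _ _ => Finset.sum_comm)

lemma sum3_comm13 (F : Fin n → Fin n → Fin n → ℝ) :
    (∑ c : Fin n, ∑ f : Fin n, ∑ d : Fin n, F c f d)
      = ∑ c : Fin n, ∑ f : Fin n, ∑ d : Fin n, F d f c :=
  ((sum3_comm12 F).trans (sum3_comm23 (fun c f d => F f c d))).trans
    (sum3_comm12 (fun c f d => F d c f))

lemma sum3_cycle' (F : Fin n → Fin n → Fin n → ℝ) :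
    (∑ c : Fin n, ∑ f : Fin n, ∑ d : Fin n, F c f d)
      = ∑ c : Fin n, ∑ f : Fin n, ∑ d : Fin n, F d c f :=
  (sum3_comm12 F).trans (sum3_comm23 (fun c f d => F f c d))


end Helpers


lemma sum_factor {n : ℕ} (m u w : ℝ) (P Q : Fin n → ℝ) :
    ∑ e : Fin n, (u * P e - w * Q e) * m
      = u * (∑ e : Fin n, P e) * m - w * (∑ e : Fin n, Q e) * m := by
  rw [show u * (∑ e : Fin n, P e) * m = ∑ e : Fin n, u * P e * m by
        rw [Finset.mul_sum, Finset.sum_mul],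
      show w * (∑ e : Fin n, Q e) * m = ∑ e : Fin n, w * Q e * m by
        rw [Finset.mul_sum, Finset.sum_mul],
      ← Finset.sum_sub_distrib]
  apply Finset.sum_congr rfl; intro e _; ring

section Main
variable (g : Met 4) (Ξ s : Pt 4 → ℝ) (L : Pt 4 → Fin 4 → Fin 4 → ℝ)
  (d : Pt 4 → Fin 4 → Fin 4 → Fin 4 → Fin 4 → ℝ)

/-- The common canonical form of both sides of the second integrability condition. -/
def EE (x : Pt 4) (a b : Fin 4) : ℝ :=
  (∑ c : Fin 4, ∑ f : Fin 4,
      (pd a (fun y => L y b c) x - pd b (fun y => L y a c) x) * ginv g x c f * pd f Ξ x)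
  + (∑ c : Fin 4, ∑ f : Fin 4,
      (L x b c * ginv g x c f * pd a (fun y => pd f Ξ y) x
        - L x a c * ginv g x c f * pd b (fun y => pd f Ξ y) x))
  + (∑ c : Fin 4, ∑ f : Fin 4, ∑ e : Fin 4,
      (L x a c * (Chr g x c b e * ginv g x e f + Chr g x f b e * ginv g x c e)
        - L x b c * (Chr g x c a e * ginv g x e f + Chr g x f a e * ginv g x c e))
        * pd f Ξ x)

lemma lhs_eq (hg : SmoothMet g) (hsym : SymmMet g) (hinv : InvMet g)
    (hΞ : SmoothF Ξ) (hs : SmoothF s) (hL : Smooth2 L) (x : Pt 4) (a b : Fin 4) :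
    covD1 g (ThetaQ g Ξ s L) x a b - covD1 g (ThetaQ g Ξ s L) x b a = EE g Ξ L x a b := by
  have cG : ∀ c f : Fin 4, ContDiff ℝ (⊤ : ℕ∞) fun y => ginv g y c f :=
    fun c f => contDiff_ginv hg hinv c f
  have cX1 : ∀ f : Fin 4, ContDiff ℝ (⊤ : ℕ∞) fun y => pd f Ξ y := fun f => contDiff_pd hΞ f
  have cP : ∀ v c f : Fin 4, ContDiff ℝ (⊤ : ℕ∞) fun y => L y v c * ginv g y c f * pd f Ξ y :=
    fun v c f => ((hL v c).mul (cG c f)).mul (cX1 f)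
  have dP : ∀ v c f : Fin 4, DifferentiableAt ℝ (fun y => L y v c * ginv g y c f * pd f Ξ y) x :=
    fun v c f => ((cP v c f).differentiable (by simp)).differentiableAt
  have cS : ∀ v c : Fin 4, ContDiff ℝ (⊤ : ℕ∞) fun y => ∑ f : Fin 4, L y v c * ginv g y c f * pd f Ξ y :=
    fun v c => ContDiff.sum (fun f _ => cP v c f)
  have cSS : ∀ v : Fin 4,
      ContDiff ℝ (⊤ : ℕ∞) fun y => ∑ c : Fin 4, ∑ f : Fin 4, L y v c * ginv g y c f * pd f Ξ y :=
    fun v => ContDiff.sum (fun c _ => cS v c)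
  have hTheta : ∀ u v : Fin 4, pd u (fun y => ThetaQ g Ξ s L y v) x
      = pd u (fun y => pd v s y) x
        + ∑ c : Fin 4, ∑ f : Fin 4,
            (pd u (fun y => L y v c) x * ginv g x c f * pd f Ξ x
             + L x v c * pd u (fun y => ginv g y c f) x * pd f Ξ x
             + L x v c * ginv g x c f * pd u (fun y => pd f Ξ y) x) := by
    intro u v
    have h1 : (fun y => ThetaQ g Ξ s L y v)
        = fun y => pd v s y + ∑ c : Fin 4, ∑ f : Fin 4, L y v c * ginv g y c f * pd f Ξ y := rfl
    rw [h1, pd_add ((contDiff_pd hs v).differentiable (by simp)).differentiableAt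
          ((cSS v).differentiable (by simp)).differentiableAt u]
    congr 1
    rw [pd_sum (fun c _ => ((cS v c).differentiable (by simp)).differentiableAt) u]
    apply Finset.sum_congr rfl; intro c _
    rw [pd_sum (fun f _ => dP v c f) u]
    apply Finset.sum_congr rfl; intro f _
    rw [pd_mul (((hL v c).mul (cG c f)).differentiable (by simp)).differentiableAt
          ((cX1 f).differentiable (by simp)).differentiableAt u,
        pd_mul ((hL v c).differentiable (by simp)).differentiableAt
          ((cG c f).differentiable (by simp)).differentiableAt u]
    ring
  have hcov : ∀ u v : Fin 4, covD1 g (ThetaQ g Ξ s L) x u v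
      = pd u (fun y => ThetaQ g Ξ s L y v) x
        - ∑ c : Fin 4, Chr g x c u v * ThetaQ g Ξ s L x c := fun u v => rfl
  have hChr : (∑ c : Fin 4, Chr g x c a b * ThetaQ g Ξ s L x c)
      = ∑ c : Fin 4, Chr g x c b a * ThetaQ g Ξ s L x c :=
    Finset.sum_congr rfl (fun c _ => by rw [Chr_symm hsym x c a b])
  rw [hcov, hcov, hTheta, hTheta, pd_comm hs a b x, hChr]
  have hmain : (∑ c : Fin 4, ∑ f : Fin 4,
        (pd a (fun y => L y b c) x * ginv g x c f * pd f Ξ x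
         + L x b c * pd a (fun y => ginv g y c f) x * pd f Ξ x
         + L x b c * ginv g x c f * pd a (fun y => pd f Ξ y) x))
      - (∑ c : Fin 4, ∑ f : Fin 4,
        (pd b (fun y => L y a c) x * ginv g x c f * pd f Ξ x
         + L x a c * pd b (fun y => ginv g y c f) x * pd f Ξ x
         + L x a c * ginv g x c f * pd b (fun y => pd f Ξ y) x)) = EE g Ξ L x a b := by
    rw [← Finset.sum_sub_distrib]
    rw [show EE g Ξ L x a b = ∑ c : Fin 4, ∑ f : Fin 4,
        ((pd a (fun y => L y b c) x - pd b (fun y => L y a c) x) * ginv g x c f * pd f Ξ x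
          + (L x b c * ginv g x c f * pd a (fun y => pd f Ξ y) x
              - L x a c * ginv g x c f * pd b (fun y => pd f Ξ y) x)
          + ∑ e : Fin 4,
              (L x a c * (Chr g x c b e * ginv g x e f + Chr g x f b e * ginv g x c e)
                - L x b c * (Chr g x c a e * ginv g x e f + Chr g x f a e * ginv g x c e))
                * pd f Ξ x) from by
      unfold EE
      simp only [Finset.sum_add_distrib, ← Finset.sum_sub_distrib]]
    apply Finset.sum_congr rfl; intro c _
    rw [← Finset.sum_sub_distrib]
    apply Finset.sum_congr rfl; intro f _
    rw [pd_ginv_chr hg hsym hinv x a c f, pd_ginv_chr hg hsym hinv x b c f,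
      sum_factor (pd f Ξ x) (L x a c) (L x b c)
        (fun e => Chr g x c b e * ginv g x e f + Chr g x f b e * ginv g x c e)
        (fun e => Chr g x c a e * ginv g x e f + Chr g x f a e * ginv g x c e)]
    ring
  linarith [hmain]

lemma rhs_eq (hg : SmoothMet g) (hsym : SymmMet g) (hinv : InvMet g)
    (hΞ : SmoothF Ξ) (hL : Smooth2 L)
    (hLsym : ∀ x a b, L x a b = L x b a) (hdW : WeylSymm g d) (x : Pt 4) (a b : Fin 4) :
    -((∑ c : Fin 4, ∑ f : Fin 4, L x a f * ginv g x f c * UpsQ g Ξ s L x b c)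
        - (∑ c : Fin 4, ∑ f : Fin 4, L x b f * ginv g x f c * UpsQ g Ξ s L x a c))
      + (∑ c : Fin 4, ∑ f : Fin 4,
          DeltaQ g Ξ L d x a b c * ginv g x c f * pd f Ξ x) = EE g Ξ L x a b := by
  -- Expansion of the Υ terms
  have hUps : ∀ u v : Fin 4,
      (∑ c : Fin 4, ∑ f : Fin 4, L x u f * ginv g x f c * UpsQ g Ξ s L x v c)
        = (∑ c : Fin 4, ∑ f : Fin 4, L x u f * ginv g x f c * pd v (fun y => pd c Ξ y) x)
          - (∑ c : Fin 4, ∑ f : Fin 4, ∑ e : Fin 4,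
              L x u f * ginv g x f c * (Chr g x e v c * pd e Ξ x))
          + (∑ c : Fin 4, ∑ f : Fin 4, L x u f * ginv g x f c * (Ξ x * L x v c))
          - (∑ c : Fin 4, ∑ f : Fin 4, L x u f * ginv g x f c * (s x * g x v c)) := by
    intro u v
    have h1 : ∀ c f : Fin 4, L x u f * ginv g x f c * UpsQ g Ξ s L x v c
        = L x u f * ginv g x f c * pd v (fun y => pd c Ξ y) x
          - (∑ e : Fin 4, L x u f * ginv g x f c * (Chr g x e v c * pd e Ξ x))
          + L x u f * ginv g x f c * (Ξ x * L x v c)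
          - L x u f * ginv g x f c * (s x * g x v c) := by
      intro c f
      have hU : UpsQ g Ξ s L x v c
          = (pd v (fun y => pd c Ξ y) x - ∑ e : Fin 4, Chr g x e v c * pd e Ξ x)
            + Ξ x * L x v c - s x * g x v c := rfl
      rw [hU, ← Finset.mul_sum]
      ring
    rw [Finset.sum_congr rfl (fun c _ => Finset.sum_congr rfl (fun f _ => h1 c f))]
    simp only [Finset.sum_add_distrib, Finset.sum_sub_distrib]
  -- the ΞLL terms cancel
  have hCXi : (∑ c : Fin 4, ∑ f : Fin 4, L x a f * ginv g x f c * (Ξ x * L x b c))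
      = ∑ c : Fin 4, ∑ f : Fin 4, L x b f * ginv g x f c * (Ξ x * L x a c) := by
    rw [sum2_comm (fun c f => L x a f * ginv g x f c * (Ξ x * L x b c))]
    apply Finset.sum_congr rfl; intro c _
    apply Finset.sum_congr rfl; intro f _
    rw [ginv_symm hsym x c f]; ring
  -- the s g terms contract
  have hCs : ∀ u v : Fin 4,
      (∑ c : Fin 4, ∑ f : Fin 4, L x u f * ginv g x f c * (s x * g x v c))
        = s x * L x u v := by
    intro u v
    calc (∑ c : Fin 4, ∑ f : Fin 4, L x u f * ginv g x f c * (s x * g x v c))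
        = ∑ c : Fin 4, ∑ f : Fin 4, L x u c * s x * (ginv g x c f * g x f v) := by
          rw [sum2_comm (fun c f => L x u f * ginv g x f c * (s x * g x v c))]
          apply Finset.sum_congr rfl; intro c _
          apply Finset.sum_congr rfl; intro f _
          rw [hsym x v f]; ring
      _ = ∑ c : Fin 4, L x u c * s x * (if c = v then 1 else 0) := by
          apply Finset.sum_congr rfl; intro c _
          rw [← Finset.mul_sum, ginv_mul hinv x c v]
      _ = s x * L x u v := by
          simp [mul_ite, Finset.sum_ite_eq', mul_comm]
  -- expansion of the Δ term
  have hcov2 : ∀ c : Fin 4, covD2 g L x a b c - covD2 g L x b a c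
      = (pd a (fun y => L y b c) x - pd b (fun y => L y a c) x)
        + (∑ e : Fin 4, (Chr g x e b c * L x a e - Chr g x e a c * L x b e)) := by
    intro c
    have h2 : ∀ u v : Fin 4, covD2 g L x u v c = pd u (fun y => L y v c) x
        - ∑ e : Fin 4, Chr g x e u v * L x e c
        - ∑ e : Fin 4, Chr g x e u c * L x v e := fun u v => rfl
    rw [h2, h2,
      show (∑ e : Fin 4, Chr g x e a b * L x e c) = ∑ e : Fin 4, Chr g x e b a * L x e c
        from Finset.sum_congr rfl (fun e _ => by rw [Chr_symm hsym x e a b]),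
      Finset.sum_sub_distrib]
    ring
  have hDelta : (∑ c : Fin 4, ∑ f : Fin 4, DeltaQ g Ξ L d x a b c * ginv g x c f * pd f Ξ x)
      = (∑ c : Fin 4, ∑ f : Fin 4,
          (pd a (fun y => L y b c) x - pd b (fun y => L y a c) x) * ginv g x c f * pd f Ξ x)
        + (∑ c : Fin 4, ∑ f : Fin 4, ∑ e : Fin 4,
            (Chr g x e b c * L x a e - Chr g x e a c * L x b e) * ginv g x c f * pd f Ξ x)
        + (∑ c : Fin 4, ∑ f : Fin 4,
            (∑ e : Fin 4, ∑ f' : Fin 4, ginv g x e f' * pd e Ξ x * d x f' c a b)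
              * ginv g x c f * pd f Ξ x) := by
    have h3 : ∀ c f : Fin 4, DeltaQ g Ξ L d x a b c * ginv g x c f * pd f Ξ x
        = (pd a (fun y => L y b c) x - pd b (fun y => L y a c) x) * ginv g x c f * pd f Ξ x
          + (∑ e : Fin 4, (Chr g x e b c * L x a e - Chr g x e a c * L x b e)
              * ginv g x c f * pd f Ξ x)
          + (∑ e : Fin 4, ∑ f' : Fin 4, ginv g x e f' * pd e Ξ x * d x f' c a b)
            * ginv g x c f * pd f Ξ x := by
      intro c f
      have hD0 : DeltaQ g Ξ L d x a b c = covD2 g L x a b c - covD2 g L x b a c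
          + ∑ e : Fin 4, ∑ f' : Fin 4, ginv g x e f' * pd e Ξ x * d x f' c a b := rfl
      rw [hD0, hcov2 c,
        show (∑ e : Fin 4, (Chr g x e b c * L x a e - Chr g x e a c * L x b e)
            * ginv g x c f * pd f Ξ x)
          = (∑ e : Fin 4, (Chr g x e b c * L x a e - Chr g x e a c * L x b e))
            * ginv g x c f * pd f Ξ x
          from by rw [Finset.sum_mul, Finset.sum_mul]]
      ring
    rw [Finset.sum_congr rfl (fun c _ => Finset.sum_congr rfl (fun f _ => h3 c f))]
    simp only [Finset.sum_add_distrib]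
  -- the d-term vanishes by antisymmetry
  have hZ : (∑ c : Fin 4, ∑ f : Fin 4,
        (∑ e : Fin 4, ∑ f' : Fin 4, ginv g x e f' * pd e Ξ x * d x f' c a b)
          * ginv g x c f * pd f Ξ x) = 0 := by
    have hinner : ∀ c : Fin 4,
        (∑ e : Fin 4, ∑ f' : Fin 4, ginv g x e f' * pd e Ξ x * d x f' c a b)
          = ∑ e : Fin 4, (∑ f' : Fin 4, ginv g x e f' * pd f' Ξ x) * d x e c a b := by
      intro c
      rw [sum2_comm (fun e f' => ginv g x e f' * pd e Ξ x * d x f' c a b)]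
      apply Finset.sum_congr rfl; intro e _
      rw [Finset.sum_mul]
      apply Finset.sum_congr rfl; intro f' _
      rw [ginv_symm hsym x f' e]
    have hS : (∑ c : Fin 4, ∑ f : Fin 4,
          (∑ e : Fin 4, ∑ f' : Fin 4, ginv g x e f' * pd e Ξ x * d x f' c a b)
            * ginv g x c f * pd f Ξ x)
        = ∑ c : Fin 4, ∑ e : Fin 4,
            (∑ f' : Fin 4, ginv g x e f' * pd f' Ξ x) * d x e c a b
              * (∑ f : Fin 4, ginv g x c f * pd f Ξ x) := by
      apply Finset.sum_congr rfl; intro c _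
      rw [show (∑ f : Fin 4,
            (∑ e : Fin 4, ∑ f' : Fin 4, ginv g x e f' * pd e Ξ x * d x f' c a b)
              * ginv g x c f * pd f Ξ x)
          = (∑ e : Fin 4, ∑ f' : Fin 4, ginv g x e f' * pd e Ξ x * d x f' c a b)
            * (∑ f : Fin 4, ginv g x c f * pd f Ξ x) from by
        rw [Finset.mul_sum]
        apply Finset.sum_congr rfl; intro f _; ring]
      rw [hinner c, Finset.sum_mul]
    rw [hS]
    have hanti : (∑ c : Fin 4, ∑ e : Fin 4,
          (∑ f' : Fin 4, ginv g x e f' * pd f' Ξ x) * d x e c a b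
            * (∑ f : Fin 4, ginv g x c f * pd f Ξ x))
        = -(∑ c : Fin 4, ∑ e : Fin 4,
            (∑ f' : Fin 4, ginv g x e f' * pd f' Ξ x) * d x e c a b
              * (∑ f : Fin 4, ginv g x c f * pd f Ξ x)) := by
      nth_rewrite 1 [sum2_comm (fun c e => (∑ f' : Fin 4, ginv g x e f' * pd f' Ξ x)
        * d x e c a b * (∑ f : Fin 4, ginv g x c f * pd f Ξ x))]
      rw [show -(∑ c : Fin 4, ∑ e : Fin 4,
            (∑ f' : Fin 4, ginv g x e f' * pd f' Ξ x) * d x e c a b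
              * (∑ f : Fin 4, ginv g x c f * pd f Ξ x))
          = ∑ c : Fin 4, ∑ e : Fin 4,
            -((∑ f' : Fin 4, ginv g x e f' * pd f' Ξ x) * d x e c a b
              * (∑ f : Fin 4, ginv g x c f * pd f Ξ x)) from by
        simp [Finset.sum_neg_distrib]]
      apply Finset.sum_congr rfl; intro c _
      apply Finset.sum_congr rfl; intro e _
      rw [hdW.1 x c e a b]
      ring
    linarith
  -- relabelings
  have hHba : (∑ c : Fin 4, ∑ f : Fin 4, L x b f * ginv g x f c * pd a (fun y => pd c Ξ y) x)
      = ∑ c : Fin 4, ∑ f : Fin 4, L x b c * ginv g x c f * pd a (fun y => pd f Ξ y) x :=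
    sum2_comm (fun c f => L x b f * ginv g x f c * pd a (fun y => pd c Ξ y) x)
  have hHab : (∑ c : Fin 4, ∑ f : Fin 4, L x a f * ginv g x f c * pd b (fun y => pd c Ξ y) x)
      = ∑ c : Fin 4, ∑ f : Fin 4, L x a c * ginv g x c f * pd b (fun y => pd f Ξ y) x :=
    sum2_comm (fun c f => L x a f * ginv g x f c * pd b (fun y => pd c Ξ y) x)
  have hGab : (∑ c : Fin 4, ∑ f : Fin 4, ∑ e : Fin 4,
        L x a f * ginv g x f c * (Chr g x e b c * pd e Ξ x))
      = ∑ c : Fin 4, ∑ f : Fin 4, ∑ e : Fin 4,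
        L x a c * ginv g x c e * (Chr g x f b e * pd f Ξ x) :=
    sum3_cycle' (fun c f e => L x a f * ginv g x f c * (Chr g x e b c * pd e Ξ x))
  have hGba : (∑ c : Fin 4, ∑ f : Fin 4, ∑ e : Fin 4,
        L x b f * ginv g x f c * (Chr g x e a c * pd e Ξ x))
      = ∑ c : Fin 4, ∑ f : Fin 4, ∑ e : Fin 4,
        L x b c * ginv g x c e * (Chr g x f a e * pd f Ξ x) :=
    sum3_cycle' (fun c f e => L x b f * ginv g x f c * (Chr g x e a c * pd e Ξ x))
  have hG2 : (∑ c : Fin 4, ∑ f : Fin 4, ∑ e : Fin 4,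
        (Chr g x e b c * L x a e - Chr g x e a c * L x b e) * ginv g x c f * pd f Ξ x)
      = ∑ c : Fin 4, ∑ f : Fin 4, ∑ e : Fin 4,
        (Chr g x c b e * L x a c - Chr g x c a e * L x b c) * ginv g x e f * pd f Ξ x :=
    sum3_comm13 (fun c f e =>
      (Chr g x e b c * L x a e - Chr g x e a c * L x b e) * ginv g x c f * pd f Ξ x)
  -- rewrite EE in terms of the pieces appearing on the right-hand side
  have hEE : EE g Ξ L x a b
      = (∑ c : Fin 4, ∑ f : Fin 4,
          (pd a (fun y => L y b c) x - pd b (fun y => L y a c) x) * ginv g x c f * pd f Ξ x)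
        + ((∑ c : Fin 4, ∑ f : Fin 4, L x b f * ginv g x f c * pd a (fun y => pd c Ξ y) x)
            - (∑ c : Fin 4, ∑ f : Fin 4, L x a f * ginv g x f c * pd b (fun y => pd c Ξ y) x))
        + ((∑ c : Fin 4, ∑ f : Fin 4, ∑ e : Fin 4,
              (Chr g x e b c * L x a e - Chr g x e a c * L x b e)
                * ginv g x c f * pd f Ξ x)
            + (∑ c : Fin 4, ∑ f : Fin 4, ∑ e : Fin 4,
                L x a f * ginv g x f c * (Chr g x e b c * pd e Ξ x))
            - (∑ c : Fin 4, ∑ f : Fin 4, ∑ e : Fin 4,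
                L x b f * ginv g x f c * (Chr g x e a c * pd e Ξ x))) := by
    have e2 : (∑ c : Fin 4, ∑ f : Fin 4,
          (L x b c * ginv g x c f * pd a (fun y => pd f Ξ y) x
            - L x a c * ginv g x c f * pd b (fun y => pd f Ξ y) x))
        = (∑ c : Fin 4, ∑ f : Fin 4, L x b f * ginv g x f c * pd a (fun y => pd c Ξ y) x)
          - (∑ c : Fin 4, ∑ f : Fin 4, L x a f * ginv g x f c * pd b (fun y => pd c Ξ y) x) := by
      simp only [Finset.sum_sub_distrib]
      rw [hHba, hHab]
    have e3 : (∑ c : Fin 4, ∑ f : Fin 4, ∑ e : Fin 4,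
          (L x a c * (Chr g x c b e * ginv g x e f + Chr g x f b e * ginv g x c e)
            - L x b c * (Chr g x c a e * ginv g x e f + Chr g x f a e * ginv g x c e))
            * pd f Ξ x)
        = (∑ c : Fin 4, ∑ f : Fin 4, ∑ e : Fin 4,
            (Chr g x c b e * L x a c - Chr g x c a e * L x b c) * ginv g x e f * pd f Ξ x)
          + (∑ c : Fin 4, ∑ f : Fin 4, ∑ e : Fin 4,
              L x a c * ginv g x c e * (Chr g x f b e * pd f Ξ x))
          - (∑ c : Fin 4, ∑ f : Fin 4, ∑ e : Fin 4,
              L x b c * ginv g x c e * (Chr g x f a e * pd f Ξ x)) := by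
      rw [Finset.sum_congr rfl (fun c _ => Finset.sum_congr rfl (fun f _ =>
        Finset.sum_congr rfl (fun e _ => show
          (L x a c * (Chr g x c b e * ginv g x e f + Chr g x f b e * ginv g x c e)
            - L x b c * (Chr g x c a e * ginv g x e f + Chr g x f a e * ginv g x c e))
            * pd f Ξ x
          = (Chr g x c b e * L x a c - Chr g x c a e * L x b c) * ginv g x e f * pd f Ξ x
            + L x a c * ginv g x c e * (Chr g x f b e * pd f Ξ x)
            - L x b c * ginv g x c e * (Chr g x f a e * pd f Ξ x) from by ring)))]
      simp only [Finset.sum_add_distrib, Finset.sum_sub_distrib]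
    show (∑ c : Fin 4, ∑ f : Fin 4,
          (pd a (fun y => L y b c) x - pd b (fun y => L y a c) x) * ginv g x c f * pd f Ξ x)
        + (∑ c : Fin 4, ∑ f : Fin 4,
            (L x b c * ginv g x c f * pd a (fun y => pd f Ξ y) x
              - L x a c * ginv g x c f * pd b (fun y => pd f Ξ y) x))
        + (∑ c : Fin 4, ∑ f : Fin 4, ∑ e : Fin 4,
            (L x a c * (Chr g x c b e * ginv g x e f + Chr g x f b e * ginv g x c e)
              - L x b c * (Chr g x c a e * ginv g x e f + Chr g x f a e * ginv g x c e))
              * pd f Ξ x) = _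
    rw [e2, e3, ← hG2, ← hGab, ← hGba]
  rw [hUps a b, hUps b a, hDelta, hZ, hCXi, hCs a b, hCs b a, hLsym x b a, hEE]
  ring

end Main

/-- the second integrability condition
2∇_{[a}Θ_{b]} = -2L_{[a}{}^cΥ_{b]c} + Δ_{abc}∇^cΞ. -/
theorem second_integrability_condition
    (g : Met 4) (Ξ s : Pt 4 → ℝ) (L : Pt 4 → Fin 4 → Fin 4 → ℝ)
    (d : Pt 4 → Fin 4 → Fin 4 → Fin 4 → Fin 4 → ℝ)
    (hg : SmoothMet g) (hsym : SymmMet g) (hinv : InvMet g)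
    (hΞ : SmoothF Ξ) (hs : SmoothF s) (hL : Smooth2 L) (hd : Smooth4 d)
    (hLsym : ∀ x a b, L x a b = L x b a) (hdW : WeylSymm g d) :
    ∀ x a b,
      covD1 g (ThetaQ g Ξ s L) x a b - covD1 g (ThetaQ g Ξ s L) x b a
        = -((∑ c : Fin 4, ∑ f : Fin 4, L x a f * ginv g x f c * UpsQ g Ξ s L x b c)
            - (∑ c : Fin 4, ∑ f : Fin 4, L x b f * ginv g x f c * UpsQ g Ξ s L x a c))
          + ∑ c : Fin 4, ∑ f : Fin 4,
              DeltaQ g Ξ L d x a b c * ginv g x c f * pd f Ξ x := by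
  intro x a b
  rw [lhs_eq g Ξ s L hg hsym hinv hΞ hs hL x a b,
    ← rhs_eq g Ξ s L d hg hsym hinv hΞ hL hLsym hdW x a b]
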